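/- Let n ≥ 1, let H be an irreducible subgroup of SL(n,ℂ), and let u ∈ U_n(H). Then the trace of u equals 0 if u is not a scalar matrix, and equals n·ξ^k if u = ξ^k·I for some k ∈ ℤ/n. -/

import Mathlib

open Matrix

noncomputable section

abbrev SLC (n : ℕ) : Type := Matrix.SpecialLinearGroup (Fin n) ℂ

def xi (n : ℕ) : ℂ := Complex.exp (2 * Real.pi * Complex.I / n)

lemma xi_pow_self (n : ℕ) (hn : n ≠ 0) : xi n ^ n = 1 := by
  have h : (n : ℂ) ≠ 0 := Nat.cast_ne_zero.mpr hn
  have h2 : (n : ℂ) * (2 * Real.pi * Complex.I / n) = 2 * Real.pi * Complex.I := by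
    field_simp
  simp only [xi]
  rw [← Complex.exp_nat_mul, h2, Complex.exp_two_pi_mul_I]

def xiSL (n : ℕ) : SLC n :=
  if hn : n = 0 then 1 else
    ⟨xi n • (1 : Matrix (Fin n) (Fin n) ℂ), by
      rw [Matrix.det_smul, Matrix.det_one, Fintype.card_fin, mul_one, xi_pow_self n hn]⟩

lemma xiSL_mem_center (n : ℕ) : xiSL n ∈ Subgroup.center (SLC n) := by
  rw [Subgroup.mem_center_iff]
  intro g
  by_cases hn : n = 0
  · have hx : xiSL n = 1 := by unfold xiSL; exact dif_pos hn
    rw [hx, mul_one, one_mul]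
  · have hx : ((xiSL n : SLC n) : Matrix (Fin n) (Fin n) ℂ) = xi n • (1 : Matrix (Fin n) (Fin n) ℂ) := by
      unfold xiSL; exact congrArg Subtype.val (dif_neg hn)
    apply Subtype.ext
    simp only [Matrix.SpecialLinearGroup.coe_mul, hx]
    rw [mul_smul_comm, smul_mul_assoc, mul_one, one_mul]

def centerSL (n : ℕ) : Subgroup (SLC n) := Subgroup.zpowers (xiSL n)

instance centerSL_normal (n : ℕ) : (centerSL n).Normal := by
  constructor
  intro x hx g
  have hc : g * x = x * g :=
    Subgroup.mem_center_iff.mp ((Subgroup.zpowers_le.mpr (xiSL_mem_center n)) hx) g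
  have h : g * x * g⁻¹ = x := by rw [hc, mul_inv_cancel_right]
  rwa [h]

abbrev PSLC (n : ℕ) : Type := SLC n ⧸ centerSL n

def pin (n : ℕ) : SLC n →* PSLC n := QuotientGroup.mk' (centerSL n)

def IsIrreducibleSL (n : ℕ) (H : Subgroup (SLC n)) : Prop :=
  ∀ W : Submodule ℂ (Fin n → ℂ),
    (∀ h ∈ H, ∀ v ∈ W, Matrix.mulVec (h : Matrix (Fin n) (Fin n) ℂ) v ∈ W) →
      W = ⊥ ∨ W = ⊤

def Zc (n : ℕ) (H : Subgroup (SLC n)) : Subgroup (PSLC n) :=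
  Subgroup.centralizer ((H.map (pin n) : Subgroup (PSLC n)) : Set (PSLC n))

def Un (n : ℕ) (H : Subgroup (SLC n)) : Subgroup (SLC n) :=
  (Zc n H).comap (pin n)

def IsIrreduciblePSL (n : ℕ) (K : Subgroup (PSLC n)) : Prop :=
  IsIrreducibleSL n (K.comap (pin n))

def ConjSub {G : Type*} [Group G] (A B : Subgroup G) : Prop :=
  ∃ g : G, A.map (MulAut.conj g).toMonoidHom = B

lemma schurSL (n : ℕ) (hn : 1 ≤ n) (H : Subgroup (SLC n)) (hH : IsIrreducibleSL n H)
    (u : Matrix (Fin n) (Fin n) ℂ)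
    (hcomm : ∀ h ∈ H, u * (h : Matrix (Fin n) (Fin n) ℂ) = (h : Matrix (Fin n) (Fin n) ℂ) * u) :
    ∃ c : ℂ, u = c • (1 : Matrix (Fin n) (Fin n) ℂ) := by
  haveI : NeZero n := ⟨Nat.one_le_iff_ne_zero.mp hn⟩
  haveI : Nontrivial (Fin n → ℂ) := ⟨Pi.single ⟨0, hn⟩ 1, 0, by
    intro h
    have := congrFun h ⟨0, hn⟩
    simp at this⟩
  obtain ⟨c, hc⟩ := Module.End.exists_eigenvalue (Matrix.mulVecLin u)
  refine ⟨c, ?_⟩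
  set W := Module.End.eigenspace (Matrix.mulVecLin u) c with hW
  have hWne : W ≠ ⊥ := hc
  have hinv : ∀ h ∈ H, ∀ v ∈ W, Matrix.mulVec (h : Matrix (Fin n) (Fin n) ℂ) v ∈ W := by
    intro h hh v hv
    have hv' : u *ᵥ v = c • v := by
      simpa [Matrix.mulVecLin] using (Module.End.mem_eigenspace_iff.mp hv)
    rw [hW, Module.End.mem_eigenspace_iff]
    show u *ᵥ ((h : Matrix (Fin n) (Fin n) ℂ) *ᵥ v) = c • ((h : Matrix (Fin n) (Fin n) ℂ) *ᵥ v)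
    rw [Matrix.mulVec_mulVec, hcomm h hh, ← Matrix.mulVec_mulVec, hv',
      Matrix.mulVec_smul]
  have hWtop : W = ⊤ := (hH W hinv).resolve_left hWne
  have hall : ∀ v : Fin n → ℂ, u *ᵥ v = c • v := by
    intro v
    have : v ∈ W := hWtop ▸ Submodule.mem_top
    simpa [Matrix.mulVecLin] using (Module.End.mem_eigenspace_iff.mp this)
  ext i j
  have := congrFun (hall (Pi.single j 1)) i
  simp only [Matrix.mulVec_single_one, Matrix.col_apply, mul_one, Pi.smul_apply] at this
  rw [this]
  by_cases hij : i = j <;> simp [Matrix.one_apply, hij, Pi.single_apply, eq_comm]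

lemma xiSL_coe (n : ℕ) (hn0 : n ≠ 0) :
    ((xiSL n : SLC n) : Matrix (Fin n) (Fin n) ℂ) = xi n • (1 : Matrix (Fin n) (Fin n) ℂ) := by
  simp [xiSL, hn0]

lemma key_comm (n : ℕ) (hn : 1 ≤ n) (H : Subgroup (SLC n))
    (u : SLC n) (hu : u ∈ Un n H) (h : SLC n) (hh : h ∈ H) :
    ∃ k : ℕ, (u : Matrix (Fin n) (Fin n) ℂ) * (h : Matrix (Fin n) (Fin n) ℂ)
      = xi n ^ k • ((h : Matrix (Fin n) (Fin n) ℂ) * (u : Matrix (Fin n) (Fin n) ℂ)) := by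
  have hn0 : n ≠ 0 := Nat.one_le_iff_ne_zero.mp hn
  have hmem : pin n u ∈ Zc n H := hu
  have hcomm : pin n h * pin n u = pin n u * pin n h :=
    Subgroup.mem_centralizer_iff.mp hmem _ (Subgroup.mem_map_of_mem _ hh)
  have hq : pin n (h * u) = pin n (u * h) := by
    rw [_root_.map_mul, _root_.map_mul]; exact hcomm
  have hmem2 : (h * u)⁻¹ * (u * h) ∈ centerSL n := by
    rw [← QuotientGroup.eq]
    exact hq
  obtain ⟨m, hm⟩ := hmem2
  have hm' : xiSL n ^ m = (h * u)⁻¹ * (u * h) := hm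
  -- reduce the exponent mod n
  have hxinN : xiSL n ^ n = (1 : SLC n) := by
    apply Subtype.ext
    rw [Matrix.SpecialLinearGroup.coe_pow, xiSL_coe n hn0, smul_pow, one_pow,
      xi_pow_self n hn0, one_smul, Matrix.SpecialLinearGroup.coe_one]
  have hxin : xiSL n ^ (n : ℤ) = 1 := by rw [zpow_natCast]; exact hxinN
  have hmod : xiSL n ^ m = xiSL n ^ ((m % n).toNat) := by
    have h0 : (0:ℤ) ≤ m % n := Int.emod_nonneg m (by exact_mod_cast hn0)
    rw [← zpow_natCast, Int.toNat_of_nonneg h0]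
    conv_lhs => rw [← Int.emod_add_mul_ediv m n]
    rw [_root_.zpow_add, _root_.zpow_mul, hxin, _root_.one_zpow, mul_one]
  refine ⟨(m % n).toNat, ?_⟩
  have heq : u * h = (h * u) * xiSL n ^ ((m % n).toNat) := by
    rw [← hmod, hm', mul_inv_cancel_left]
  have hcoe : ((xiSL n ^ ((m % n).toNat) : SLC n) : Matrix (Fin n) (Fin n) ℂ)
      = xi n ^ ((m % n).toNat) • (1 : Matrix (Fin n) (Fin n) ℂ) := by
    rw [Matrix.SpecialLinearGroup.coe_pow, xiSL_coe n hn0, smul_pow, one_pow]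
  calc (u : Matrix (Fin n) (Fin n) ℂ) * (h : Matrix (Fin n) (Fin n) ℂ)
      = ((u * h : SLC n) : Matrix (Fin n) (Fin n) ℂ) := rfl
    _ = (((h * u) * xiSL n ^ ((m % n).toNat) : SLC n) : Matrix (Fin n) (Fin n) ℂ) := by rw [heq]
    _ = ((h : Matrix (Fin n) (Fin n) ℂ) * (u : Matrix (Fin n) (Fin n) ℂ))
        * (xi n ^ ((m % n).toNat) • (1 : Matrix (Fin n) (Fin n) ℂ)) := by
        rw [Matrix.SpecialLinearGroup.coe_mul, hcoe]; rfl
    _ = xi n ^ ((m % n).toNat) • ((h : Matrix (Fin n) (Fin n) ℂ) * (u : Matrix (Fin n) (Fin n) ℂ)) := by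
        rw [mul_smul_comm, mul_one]

/-- Proposition 2.4: the trace of `u ∈ U_n(H)` is `0` if `u` is not scalar,
and `n·ξ^k` if `u = ξ^k·I`. -/
theorem stmt3 (n : ℕ) (hn : 1 ≤ n) (H : Subgroup (SLC n)) (hH : IsIrreducibleSL n H)
    (u : SLC n) (hu : u ∈ Un n H) :
    ((¬ ∃ c : ℂ, (u : Matrix (Fin n) (Fin n) ℂ) = c • (1 : Matrix (Fin n) (Fin n) ℂ)) →
      Matrix.trace (u : Matrix (Fin n) (Fin n) ℂ) = 0) ∧
    (∀ k : ℕ, (u : Matrix (Fin n) (Fin n) ℂ) = xi n ^ k • (1 : Matrix (Fin n) (Fin n) ℂ) →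
      Matrix.trace (u : Matrix (Fin n) (Fin n) ℂ) = (n : ℂ) * xi n ^ k) := by
  constructor
  · intro hns
    by_cases hc : ∀ h ∈ H, (u : Matrix (Fin n) (Fin n) ℂ) * (h : Matrix (Fin n) (Fin n) ℂ)
        = (h : Matrix (Fin n) (Fin n) ℂ) * (u : Matrix (Fin n) (Fin n) ℂ)
    · exact absurd (schurSL n hn H hH _ hc) hns
    · push_neg at hc
      obtain ⟨h, hh, hne⟩ := hc
      obtain ⟨k, hk⟩ := key_comm n hn H u hu h hh
      set c := xi n ^ k with hcdef
      have hc1 : c ≠ 1 := by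
        intro h1
        rw [h1, one_smul] at hk
        exact hne hk
      -- trace u = c * trace u
      have hinv : ((h⁻¹ : SLC n) : Matrix (Fin n) (Fin n) ℂ)
          * (h : Matrix (Fin n) (Fin n) ℂ) = 1 := by
        rw [← Matrix.SpecialLinearGroup.coe_mul, inv_mul_cancel,
          Matrix.SpecialLinearGroup.coe_one]
      have htr : Matrix.trace (u : Matrix (Fin n) (Fin n) ℂ)
          = c * Matrix.trace (u : Matrix (Fin n) (Fin n) ℂ) := by
        have hinv2 : (h : Matrix (Fin n) (Fin n) ℂ)
            * ((h⁻¹ : SLC n) : Matrix (Fin n) (Fin n) ℂ) = 1 := by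
          rw [← Matrix.SpecialLinearGroup.coe_mul, mul_inv_cancel,
            Matrix.SpecialLinearGroup.coe_one]
        calc Matrix.trace (u : Matrix (Fin n) (Fin n) ℂ)
            = Matrix.trace ((u : Matrix (Fin n) (Fin n) ℂ)
              * (h : Matrix (Fin n) (Fin n) ℂ) * ((h⁻¹ : SLC n) : Matrix (Fin n) (Fin n) ℂ)) := by
              rw [Matrix.mul_assoc, hinv2, Matrix.mul_one]
          _ = Matrix.trace ((c • ((h : Matrix (Fin n) (Fin n) ℂ)
              * (u : Matrix (Fin n) (Fin n) ℂ))) * ((h⁻¹ : SLC n) : Matrix (Fin n) (Fin n) ℂ)) := by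
              rw [hk]
          _ = c * Matrix.trace ((h : Matrix (Fin n) (Fin n) ℂ)
              * (u : Matrix (Fin n) (Fin n) ℂ) * ((h⁻¹ : SLC n) : Matrix (Fin n) (Fin n) ℂ)) := by
              rw [Matrix.smul_mul, Matrix.trace_smul, smul_eq_mul]
          _ = c * Matrix.trace (u : Matrix (Fin n) (Fin n) ℂ) := by
              rw [Matrix.trace_mul_comm, ← Matrix.mul_assoc, hinv, Matrix.one_mul]
      have : (1 - c) * Matrix.trace (u : Matrix (Fin n) (Fin n) ℂ) = 0 := by
        rw [sub_mul, one_mul]; linear_combination htr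
      rcases mul_eq_zero.mp this with h0 | h0
      · exact absurd (by linear_combination -h0 : c = 1) hc1
      · exact h0
  · intro k hk
    rw [hk, Matrix.trace_smul, Matrix.trace_one, smul_eq_mul, Fintype.card_fin, mul_comm]
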